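/- arXiv:2511.20674 — 4 statements merged into one kernel-verified Lean document; each statement's English description precedes it below -/
import Mathlib

section
/- Let J be the (n+1)×(n+1) matrix with first column (−1, −1, …, −1, 0)ᵀ, last row (0, 1, 1, …, 1), and diagonal block diag(p₁, …, pₙ) in the remaining positions (i.e., J_{i,i+1} = pᵢ for i = 1,…,n, all other entries zero), where p₁, …, pₙ ∈ ℂ. If all pᵢ are nonzero, then J is singular if and only if Σ_{i=1}^{n} ∏_{j≠i} p_j = 0. -/
/-- The Lagrange Jacobian `J` (first column `(-1,…,-1,0)ᵀ`, entries `pᵢ` at `(i,i+1)`,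
last row `(0,1,…,1)`) with all `pᵢ ≠ 0` is singular iff `Σᵢ ∏_{j≠i} pⱼ = 0`. -/
theorem stmt_4 (n : ℕ) (hn : 1 ≤ n) (p : Fin n → ℂ) (hp : ∀ i, p i ≠ 0) :
    (Matrix.of fun i j : Fin (n + 1) =>
        if h : (i : ℕ) < n then
          if j = 0 then (-1 : ℂ)
          else if (j : ℕ) = (i : ℕ) + 1 then p ⟨i, h⟩ else 0
        else if j = 0 then 0 else 1).det = 0 ↔
      ∑ i : Fin n, ∏ j ∈ Finset.univ.erase i, p j = 0 := by
  set M : Matrix (Fin (n+1)) (Fin (n+1)) ℂ := Matrix.of fun i j : Fin (n + 1) =>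
        if h : (i : ℕ) < n then
          if j = 0 then (-1 : ℂ)
          else if (j : ℕ) = (i : ℕ) + 1 then p ⟨i, h⟩ else 0
        else if j = 0 then 0 else 1 with hM
  have hrow : ∀ (v : Fin (n+1) → ℂ) (i : Fin n),
      M.mulVec v i.castSucc = -v 0 + p i * v i.succ := by
    intro v i
    have hi : ((i.castSucc : Fin (n+1)) : ℕ) < n := by simp [i.isLt]
    simp only [Matrix.mulVec, dotProduct, hM, Matrix.of_apply, dif_pos hi]
    rw [Fin.sum_univ_succ]
    simp only [if_pos rfl]
    have : ∀ k : Fin n, (if (k.succ : Fin (n+1)) = 0 then (-1:ℂ)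
        else if ((k.succ : Fin (n+1)) : ℕ) = ((i.castSucc : Fin (n+1)) : ℕ) + 1
          then p ⟨((i.castSucc : Fin (n+1)) : ℕ), hi⟩ else 0) * v k.succ
        = (if k = i then p i else 0) * v k.succ := by
      intro k
      rw [if_neg (Fin.succ_ne_zero k)]
      congr 1
      simp only [Fin.val_succ, Fin.coe_castSucc, Nat.succ_inj, Fin.val_eq_val]
    rw [Finset.sum_congr rfl (fun k _ => this k)]
    simp [Finset.sum_ite_eq', mul_comm]
  have hlast : ∀ (v : Fin (n+1) → ℂ),
      M.mulVec v (Fin.last n) = ∑ k : Fin n, v k.succ := by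
    intro v
    have hi : ¬ ((Fin.last n : Fin (n+1)) : ℕ) < n := by simp
    simp only [Matrix.mulVec, dotProduct, hM, Matrix.of_apply, dif_neg hi]
    rw [Fin.sum_univ_succ]
    simp [Fin.succ_ne_zero]
  have hprod : (∏ j, p j) ≠ 0 := Finset.prod_ne_zero_iff.mpr (fun i _ => hp i)
  have hsum : (∑ i : Fin n, ∏ j ∈ Finset.univ.erase i, p j)
      = (∑ i : Fin n, (p i)⁻¹) * ∏ j, p j := by
    rw [Finset.sum_mul]
    refine Finset.sum_congr rfl fun i _ => ?_
    rw [← Finset.prod_erase_mul Finset.univ p (Finset.mem_univ i)]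
    field_simp [hp i]
  rw [← Matrix.exists_mulVec_eq_zero_iff, hsum, mul_eq_zero, or_iff_left hprod]
  constructor
  · rintro ⟨v, hv, hveq⟩
    have h1 : ∀ i : Fin n, v i.succ = v 0 * (p i)⁻¹ := by
      intro i
      have := hrow v i
      rw [hveq] at this
      simp only [Pi.zero_apply] at this
      field_simp [hp i]
      linear_combination -this
    have h2 := hlast v
    rw [hveq] at h2
    simp only [Pi.zero_apply] at h2
    have h3 : v 0 * ∑ i : Fin n, (p i)⁻¹ = 0 := by
      rw [Finset.mul_sum]
      rw [← h2.symm]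
      exact Finset.sum_congr rfl fun i _ => (h1 i).symm
    rcases mul_eq_zero.mp h3 with h | h
    · exfalso
      apply hv
      funext j
      refine Fin.cases ?_ (fun i => ?_) j
      · simpa using h
      · simp [h1 i, h]
    · exact h
  · intro h
    refine ⟨Fin.cases 1 (fun i => (p i)⁻¹), ?_, ?_⟩
    · intro hv
      have : (1 : ℂ) = 0 := by
        have := congrFun hv 0
        simpa using this
      simp at this
    · funext j
      refine Fin.lastCases ?_ (fun i => ?_) j
      · rw [hlast]
        simpa using h
      · rw [hrow]
        simp [hp i]
end

section
/- With J as before (first column (−1,…,−1,0)ᵀ, last row (0,1,…,1), diagonal entries p₁,…,pₙ in positions (i, i+1)): if at least two of the pᵢ are zero, then J has a nontrivial kernel; if exactly one pᵢ is zero, then J is invertible. -/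
/-!
Write `v = (a, w)` with `a = v 0` and `w i = v (i + 1)`. Row `i < n` of `J *ᵥ v` is
`-a + pᵢ wᵢ` and the last row is `∑ wᵢ`, so `J *ᵥ v = 0` iff `pᵢ wᵢ = a` for all `i` and
`∑ wᵢ = 0`. If `pᵢ = pⱼ = 0` with `i ≠ j`, then `a = 0` and `w = eᵢ - eⱼ` solve this. If only
`pᵢ` vanishes, the `i`-th equation forces `a = 0`, the others force `wⱼ = 0` for `j ≠ i`, and
then the sum equation forces `wᵢ = 0`.
-/

open Finset Matrix

namespace LagrangeJacobian

variable {R : Type*} [CommRing R] {n : ℕ}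

def jacobian (p : Fin n → R) : Matrix (Fin (n + 1)) (Fin (n + 1)) R :=
  Matrix.of fun i j : Fin (n + 1) =>
    if h : (i : ℕ) < n then
      if j = 0 then (-1 : R)
      else if (j : ℕ) = (i : ℕ) + 1 then p ⟨i, h⟩ else 0
    else if j = 0 then 0 else 1

variable (p : Fin n → R)

@[simp]
lemma jacobian_castSucc_zero (i : Fin n) : jacobian p i.castSucc 0 = -1 := by
  simp [jacobian]

@[simp]
lemma jacobian_castSucc_succ (i k : Fin n) :
    jacobian p i.castSucc k.succ = if i = k then p i else 0 := by
  simp only [jacobian, of_apply, Fin.val_castSucc, i.isLt, dif_pos, Fin.succ_ne_zero,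
    if_false, Fin.val_succ, add_left_inj, Fin.val_inj, eq_comm (a := k)]

@[simp]
lemma jacobian_last_zero : jacobian p (Fin.last n) 0 = 0 := by
  simp [jacobian]

@[simp]
lemma jacobian_last_succ (k : Fin n) : jacobian p (Fin.last n) k.succ = 1 := by
  simp [jacobian, Fin.succ_ne_zero]

lemma jacobian_mulVec_castSucc (v : Fin (n + 1) → R) (i : Fin n) :
    (jacobian p *ᵥ v) i.castSucc = -v 0 + p i * v i.succ := by
  simp [mulVec, dotProduct, Fin.sum_univ_succ]

lemma jacobian_mulVec_last (v : Fin (n + 1) → R) :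
    (jacobian p *ᵥ v) (Fin.last n) = ∑ i : Fin n, v i.succ := by
  simp [mulVec, dotProduct, Fin.sum_univ_succ]

lemma jacobian_mulVec_eq_zero_iff (v : Fin (n + 1) → R) :
    jacobian p *ᵥ v = 0 ↔ (∀ i, p i * v i.succ = v 0) ∧ ∑ i : Fin n, v i.succ = 0 := by
  simp only [funext_iff, Fin.forall_fin_succ', Pi.zero_apply, jacobian_mulVec_castSucc, jacobian_mulVec_last,
    neg_add_eq_zero, eq_comm (a := v 0)]

lemma exists_ne_zero_jacobian_mulVec_eq_zero [Nontrivial R] {i j : Fin n} (hij : i ≠ j)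
    (hi : p i = 0) (hj : p j = 0) : ∃ v ≠ 0, jacobian p *ᵥ v = 0 := by
  classical
  refine ⟨Fin.cons 0 (Pi.single i 1 - Pi.single j 1), fun hv => ?_, ?_⟩
  · simpa [hij] using congrFun hv i.succ
  · rw [jacobian_mulVec_eq_zero_iff]
    refine ⟨fun k => ?_, by simp [sum_sub_distrib]⟩
    by_cases hki : k = i
    · simp [hki, hi]
    by_cases hkj : k = j
    · simp [hkj, hj]
    · simp [hki, hkj]

lemma det_jacobian_ne_zero [IsDomain R] {i : Fin n} (hi : p i = 0) (hj : ∀ j, j ≠ i → p j ≠ 0) :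
    (jacobian p).det ≠ 0 := by
  classical
  rw [Ne, ← exists_mulVec_eq_zero_iff]
  rintro ⟨v, hv, hJv⟩
  obtain ⟨hrows, hsum⟩ := (jacobian_mulVec_eq_zero_iff p v).1 hJv
  have h0 : v 0 = 0 := by rw [← hrows i, hi, zero_mul]
  have hsucc_ne : ∀ j, j ≠ i → v j.succ = 0 := fun j hji =>
    (mul_eq_zero.1 ((hrows j).trans h0)).resolve_left (hj j hji)
  have hsucc_i : v i.succ = 0 := by
    rwa [sum_eq_single i (fun j _ hji => hsucc_ne j hji) (by simp)] at hsum
  refine hv (funext fun k => Fin.cases h0 (fun j => ?_) k)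
  by_cases hji : j = i
  · rw [hji, hsucc_i]; rfl
  · exact hsucc_ne j hji

end LagrangeJacobian

theorem stmt_5_general (n : ℕ) (p : Fin n → ℂ) :
    (((∃ i j : Fin n, i ≠ j ∧ p i = 0 ∧ p j = 0) →
        ∃ v : Fin (n + 1) → ℂ, v ≠ 0 ∧
          (Matrix.of fun i j : Fin (n + 1) =>
              if h : (i : ℕ) < n then
                if j = 0 then (-1 : ℂ)
                else if (j : ℕ) = (i : ℕ) + 1 then p ⟨i, h⟩ else 0
              else if j = 0 then 0 else 1).mulVec v = 0) ∧
      ((∃ i : Fin n, p i = 0 ∧ ∀ j : Fin n, j ≠ i → p j ≠ 0) →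
        IsUnit (Matrix.of fun i j : Fin (n + 1) =>
              if h : (i : ℕ) < n then
                if j = 0 then (-1 : ℂ)
                else if (j : ℕ) = (i : ℕ) + 1 then p ⟨i, h⟩ else 0
              else if j = 0 then 0 else 1).det)) := by
  refine ⟨fun ⟨i, j, hij, hi, hj⟩ => ?_, fun ⟨i, hi, hj⟩ => ?_⟩
  · exact LagrangeJacobian.exists_ne_zero_jacobian_mulVec_eq_zero p hij hi hj
  · exact isUnit_iff_ne_zero.2 (LagrangeJacobian.det_jacobian_ne_zero p hi hj)

/-- For the Lagrange Jacobian `J`: if at least two of the `pᵢ` vanish then `J` has a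
nontrivial kernel; if exactly one `pᵢ` vanishes then `J` is invertible. -/
theorem stmt_5 (n : ℕ) (hn : 2 ≤ n) (p : Fin n → ℂ) :
    (((∃ i j : Fin n, i ≠ j ∧ p i = 0 ∧ p j = 0) →
        ∃ v : Fin (n + 1) → ℂ, v ≠ 0 ∧
          (Matrix.of fun i j : Fin (n + 1) =>
              if h : (i : ℕ) < n then
                if j = 0 then (-1 : ℂ)
                else if (j : ℕ) = (i : ℕ) + 1 then p ⟨i, h⟩ else 0
              else if j = 0 then 0 else 1).mulVec v = 0) ∧
      ((∃ i : Fin n, p i = 0 ∧ ∀ j : Fin n, j ≠ i → p j ≠ 0) →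
        IsUnit (Matrix.of fun i j : Fin (n + 1) =>
              if h : (i : ℕ) < n then
                if j = 0 then (-1 : ℂ)
                else if (j : ℕ) = (i : ℕ) + 1 then p ⟨i, h⟩ else 0
              else if j = 0 then 0 else 1).det)) :=
  stmt_5_general n p
end

section
/- The determinant of the (n+1)×(n+1) matrix J with first column (−1,…,−1,0)ᵀ, entries J_{i,i+1} = pᵢ for i = 1,…,n, last row (0,1,…,1), and zeros elsewhere, satisfies, as a polynomial identity, det J = ± Σ_{i=1}^{n} ∏_{j≠i} p_j for a fixed sign depending only on n. -/
open Matrix Finset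

/-- The Lagrange Jacobian matrix. -/
private def MM (n : ℕ) (R : Type*) [CommRing R] (p : Fin n → R) :
    Matrix (Fin (n + 1)) (Fin (n + 1)) R :=
  Matrix.of fun i j : Fin (n + 1) =>
    if h : (i : ℕ) < n then
      if j = 0 then (-1 : R)
      else if (j : ℕ) = (i : ℕ) + 1 then p ⟨i, h⟩ else 0
    else if j = 0 then 0 else 1

/-- Superdiagonal matrix with last row all ones. -/
private def SS (n : ℕ) (R : Type*) [CommRing R] (q : Fin n → R) :
    Matrix (Fin (n + 1)) (Fin (n + 1)) R :=
  Matrix.of fun i j : Fin (n + 1) =>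
    if h : (i : ℕ) < n then (if (j : ℕ) = (i : ℕ) + 1 then q ⟨i, h⟩ else 0) else 1

private lemma detSS (n : ℕ) (R : Type*) [CommRing R] (q : Fin n → R) :
    (SS n R q).det = (-1) ^ n * ∏ j, q j := by
  rw [Matrix.det_succ_column_zero]
  rw [Finset.sum_eq_single (Fin.last n)]
  · have h1 : (SS n R q) (Fin.last n) 0 = 1 := by simp [SS]
    have h2 : (SS n R q).submatrix (Fin.last n).succAbove Fin.succ = Matrix.diagonal q := by
      ext r c
      simp only [Matrix.submatrix_apply, Fin.succAbove_last, SS, Matrix.of_apply,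
        Matrix.diagonal_apply]
      rw [dif_pos (by simp [r.isLt])]
      have : ((c.succ : Fin (n+1)) : ℕ) = (c : ℕ) + 1 := rfl
      rw [this]
      simp only [Fin.coe_castSucc, Nat.add_right_cancel_iff]
      by_cases hrc : r = c
      · subst hrc; simp
      · rw [if_neg (fun hh : (c:ℕ) = (r:ℕ) => hrc (Fin.ext hh.symm)), if_neg hrc]
    rw [h1, h2, Matrix.det_diagonal]
    simp
  · intro i _ hi
    have : (SS n R q) i 0 = 0 := by
      have hlt : (i : ℕ) < n := by
        rcases lt_or_eq_of_le (Nat.lt_succ_iff.mp i.isLt) with h | h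
        · exact h
        · exact absurd (Fin.ext h : i = Fin.last n) hi
      simp [SS, hlt]
    rw [this]; ring
  · intro h; exact absurd (Finset.mem_univ _) h

private lemma erase_zero_eq (n : ℕ) :
    (Finset.univ.erase (0 : Fin (n + 1))) = Finset.univ.image Fin.succ := by
  ext x
  simp [Finset.mem_image, ← Fin.exists_succ_eq, eq_comm]

private lemma erase_succ_eq (n : ℕ) (i : Fin n) :
    (Finset.univ.erase (i.succ : Fin (n + 1))) =
      insert (0 : Fin (n + 1)) ((Finset.univ.erase i).image Fin.succ) := by
  ext x
  induction x using Fin.cases with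
  | zero => simp [(Fin.succ_ne_zero i).symm]
  | succ y =>
      simp [Fin.succ_inj, Fin.succ_ne_zero, eq_comm (a := y)]

private lemma prod_erase_zero {R : Type*} [CommRing R] (n : ℕ) (p : Fin (n + 1) → R) :
    ∏ j ∈ Finset.univ.erase (0 : Fin (n + 1)), p j = ∏ j : Fin n, p j.succ := by
  rw [erase_zero_eq, Finset.prod_image (fun a _ b _ h => Fin.succ_injective n h)]

private lemma prod_erase_succ {R : Type*} [CommRing R] (n : ℕ) (p : Fin (n + 1) → R)
    (i : Fin n) :
    ∏ j ∈ Finset.univ.erase (i.succ : Fin (n + 1)), p j =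
      p 0 * ∏ j ∈ Finset.univ.erase i, p j.succ := by
  rw [erase_succ_eq, Finset.prod_insert, Finset.prod_image (fun a _ b _ h => Fin.succ_injective n h)]
  simp [Finset.mem_image, Fin.succ_ne_zero, eq_comm]

private lemma detMM (n : ℕ) (R : Type*) [CommRing R] : ∀ p : Fin n → R,
    (MM n R p).det = (-1) ^ n * ∑ i : Fin n, ∏ j ∈ Finset.univ.erase i, p j := by
  induction n with
  | zero =>
      intro p
      have : MM 0 R p = !![0] := by
        ext i j
        fin_cases i; fin_cases j
        simp [MM]
      rw [this]
      simp
  | succ n ih =>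
      intro p
      rw [Matrix.det_succ_row_zero, Fin.sum_univ_succ, Fin.sum_univ_succ]
      have hrest : ∑ j : Fin n, (-1 : R) ^ ((j.succ.succ : Fin (n+2)) : ℕ) *
          (MM (n+1) R p) 0 j.succ.succ *
          ((MM (n+1) R p).submatrix Fin.succ (j.succ.succ).succAbove).det = 0 := by
        apply Finset.sum_eq_zero
        intro j _
        have : (MM (n+1) R p) 0 j.succ.succ = 0 := by
          have h0 : ((0 : Fin (n+2)) : ℕ) < n + 1 := Nat.succ_pos n
          have hne : (j.succ.succ : Fin (n+2)) ≠ 0 := Fin.succ_ne_zero _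
          have hval : ((j.succ.succ : Fin (n+2)) : ℕ) = (j : ℕ) + 2 := rfl
          simp [MM, hne, hval]
        rw [this]; ring
      rw [hrest, add_zero]
      -- j = 0 term
      have h00 : (MM (n+1) R p) 0 0 = -1 := by simp [MM]
      have hsub0 : (MM (n+1) R p).submatrix Fin.succ (0 : Fin (n+2)).succAbove =
          SS n R (fun j => p j.succ) := by
        ext r c
        simp only [Matrix.submatrix_apply, Fin.zero_succAbove, MM, SS, Matrix.of_apply]
        have hrv : ((r.succ : Fin (n+2)) : ℕ) = (r : ℕ) + 1 := rfl
        have hcv : ((c.succ : Fin (n+2)) : ℕ) = (c : ℕ) + 1 := rfl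
        by_cases h : (r : ℕ) < n
        · rw [dif_pos (by omega : ((r.succ : Fin (n+2)) : ℕ) < n + 1), dif_pos h]
          rw [if_neg (Fin.succ_ne_zero c)]
          have : (((c.succ : Fin (n+2)) : ℕ) = ((r.succ : Fin (n+2)) : ℕ) + 1) ↔
              ((c : ℕ) = (r : ℕ) + 1) := by rw [hrv, hcv]; omega
          by_cases hc : (c : ℕ) = (r : ℕ) + 1
          · rw [if_pos (this.mpr hc), if_pos hc]
            exact congrArg p (Fin.ext (by simp [hrv]))
          · rw [if_neg (fun hh => hc (this.mp hh)), if_neg hc]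
        · rw [dif_neg (by omega : ¬ ((r.succ : Fin (n+2)) : ℕ) < n + 1), dif_neg h]
          rw [if_neg (Fin.succ_ne_zero c)]
      -- j = 1 term
      have h01 : (MM (n+1) R p) 0 ((0 : Fin (n+1)).succ) = p 0 := by
        have : (((0 : Fin (n+1)).succ : Fin (n+2)) : ℕ) = 1 := rfl
        simp [MM, Fin.succ_ne_zero, this]
      have hsub1 : (MM (n+1) R p).submatrix Fin.succ ((0 : Fin (n+1)).succ).succAbove =
          MM n R (fun j => p j.succ) := by
        ext r c
        induction c using Fin.cases with
        | zero =>
            rw [Matrix.submatrix_apply, Fin.succ_succAbove_zero]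
            simp only [MM, Matrix.of_apply]
            have hrv : ((r.succ : Fin (n+2)) : ℕ) = (r : ℕ) + 1 := rfl
            by_cases h : (r : ℕ) < n
            · rw [dif_pos (by omega : ((r.succ : Fin (n+2)) : ℕ) < n + 1), dif_pos h]
              simp
            · rw [dif_neg (by omega : ¬ ((r.succ : Fin (n+2)) : ℕ) < n + 1), dif_neg h]
        | succ c =>
            rw [Matrix.submatrix_apply, Fin.succ_succAbove_succ, Fin.zero_succAbove]
            simp only [MM, Matrix.of_apply]
            have hrv : ((r.succ : Fin (n+2)) : ℕ) = (r : ℕ) + 1 := rfl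
            have hcv : ((c.succ.succ : Fin (n+2)) : ℕ) = (c : ℕ) + 2 := rfl
            have hcv' : ((c.succ : Fin (n+1)) : ℕ) = (c : ℕ) + 1 := rfl
            by_cases h : (r : ℕ) < n
            · rw [dif_pos (by omega : ((r.succ : Fin (n+2)) : ℕ) < n + 1), dif_pos h]
              rw [if_neg (Fin.succ_ne_zero _), if_neg (Fin.succ_ne_zero _)]
              have hiff : (((c.succ.succ : Fin (n+2)) : ℕ) = ((r.succ : Fin (n+2)) : ℕ) + 1) ↔
                  (((c.succ : Fin (n+1)) : ℕ) = (r : ℕ) + 1) := by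
                rw [hrv, hcv, hcv']; omega
              by_cases hc : ((c.succ : Fin (n+1)) : ℕ) = (r : ℕ) + 1
              · rw [if_pos (hiff.mpr hc), if_pos hc]
                exact congrArg p (Fin.ext (by simp [hrv]))
              · rw [if_neg (fun hh => hc (hiff.mp hh)), if_neg hc]
            · rw [dif_neg (by omega : ¬ ((r.succ : Fin (n+2)) : ℕ) < n + 1), dif_neg h]
              rw [if_neg (Fin.succ_ne_zero _), if_neg (Fin.succ_ne_zero _)]
      rw [h00, hsub0, h01, hsub1, detSS, ih]
      have hpow1 : ((-1 : R) ^ ((((0 : Fin (n+1)).succ) : Fin (n+2)) : ℕ)) = -1 := by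
        norm_num [show ((((0 : Fin (n+1)).succ) : Fin (n+2)) : ℕ) = 1 from rfl]
      rw [hpow1]
      rw [Fin.sum_univ_succ (f := fun i => ∏ j ∈ Finset.univ.erase i, p j)]
      rw [prod_erase_zero]
      have : ∀ i : Fin n, ∏ j ∈ Finset.univ.erase (i.succ : Fin (n+1)), p j =
          p 0 * ∏ j ∈ Finset.univ.erase i, p j.succ := fun i => prod_erase_succ n p i
      rw [Finset.sum_congr rfl (fun i _ => this i), ← Finset.mul_sum]
      have h0 : ((0 : Fin (n+2)) : ℕ) = 0 := rfl
      rw [h0, pow_zero]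
      ring

/-- The determinant of the Lagrange Jacobian equals, up to a sign depending only on `n`,
`Σᵢ ∏_{j≠i} pⱼ`, as a polynomial identity over any commutative ring. -/
theorem stmt_6 (n : ℕ) (hn : 1 ≤ n) (R : Type*) [CommRing R] :
    ∃ ε : R, (ε = 1 ∨ ε = -1) ∧
      ∀ p : Fin n → R,
        (Matrix.of fun i j : Fin (n + 1) =>
            if h : (i : ℕ) < n then
              if j = 0 then (-1 : R)
              else if (j : ℕ) = (i : ℕ) + 1 then p ⟨i, h⟩ else 0
            else if j = 0 then 0 else 1).det =
          ε * ∑ i : Fin n, ∏ j ∈ Finset.univ.erase i, p j := by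
  refine ⟨(-1) ^ n, ?_, fun p => detMM n R p⟩
  rcases Nat.even_or_odd n with h | h
  · left; exact h.neg_one_pow
  · right; exact h.neg_one_pow
end

section
/- Let d ≥ 2 and let k₁, k₂ be nonzero complex numbers, let c be a fixed (d−1)-th root of k₁/k₂, and assume 1 + ζ·c ≠ 0 for every (d−1)-th root of unity ζ. Then the system k₁x₁^{d−1} = k₂x₂^{d−1}, x₁ + x₂ = 1 has exactly d−1 distinct solutions in ℂ², and each solution has x₁ ≠ 0 and x₂ ≠ 0. -/
/-- Two-asset case: under the genericity assumption `1 + ζc ≠ 0` for all `(d-1)`-th roots of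
unity `ζ` (where `c^{d-1} = k₁/k₂`), the system `k₁x₁^{d-1} = k₂x₂^{d-1}`, `x₁ + x₂ = 1`
has exactly `d-1` solutions, all with both coordinates nonzero. -/
theorem stmt_19 (d : ℕ) (hd : 2 ≤ d) (k1 k2 : ℂ) (hk1 : k1 ≠ 0) (hk2 : k2 ≠ 0)
    (c : ℂ) (hc : c ^ (d - 1) = k1 / k2)
    (hgen : ∀ ζ : ℂ, ζ ^ (d - 1) = 1 → 1 + ζ * c ≠ 0) :
    {p : ℂ × ℂ | k1 * p.1 ^ (d - 1) = k2 * p.2 ^ (d - 1) ∧ p.1 + p.2 = 1}.ncard = d - 1 ∧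
      ∀ p ∈ {p : ℂ × ℂ | k1 * p.1 ^ (d - 1) = k2 * p.2 ^ (d - 1) ∧ p.1 + p.2 = 1},
        p.1 ≠ 0 ∧ p.2 ≠ 0 := by
  set n := d - 1 with hn
  have hn0 : n ≠ 0 := by omega
  have hc0 : c ≠ 0 := by
    intro h
    rw [h, zero_pow hn0] at hc
    exact hk1 (by field_simp at hc; simpa using hc.symm)
  set S := {p : ℂ × ℂ | k1 * p.1 ^ n = k2 * p.2 ^ n ∧ p.1 + p.2 = 1} with hS
  have hnz : ∀ p ∈ S, p.1 ≠ 0 ∧ p.2 ≠ 0 := by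
    rintro ⟨x, y⟩ ⟨heq, hsum⟩
    simp only at heq hsum ⊢
    constructor
    · rintro rfl
      rw [zero_pow hn0, mul_zero] at heq
      have hy : y = 0 := pow_eq_zero_iff hn0 |>.1 ((mul_eq_zero.1 heq.symm).resolve_left hk2)
      simp [hy] at hsum
    · rintro rfl
      rw [zero_pow hn0, mul_zero] at heq
      have hx : x = 0 := pow_eq_zero_iff hn0 |>.1 ((mul_eq_zero.1 heq).resolve_left hk1)
      simp [hx] at hsum
  set f : ℂ → ℂ × ℂ := fun ζ => (1 / (1 + ζ * c), ζ * c / (1 + ζ * c)) with hf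
  have himg : S = f '' {ζ : ℂ | ζ ^ n = 1} := by
    ext ⟨x, y⟩
    constructor
    · intro hp
      obtain ⟨hx, hy⟩ := hnz _ hp
      obtain ⟨heq, hsum⟩ := hp
      simp only at heq hsum
      refine ⟨y / (x * c), ?_, ?_⟩
      · show (y / (x * c)) ^ n = 1
        have hyn : y ^ n = x ^ n * c ^ n := by
          rw [hc]
          field_simp
          linear_combination -heq
        rw [div_pow, mul_pow, hyn]
        field_simp
      · have hzc : (y / (x * c)) * c = y / x := by
          field_simp
        have hden : 1 + (y / (x * c)) * c = 1 / x := by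
          rw [hzc]
          field_simp
          linear_combination hsum
        show (1 / (1 + y / (x * c) * c), y / (x * c) * c / (1 + y / (x * c) * c)) = (x, y)
        rw [Prod.mk.injEq]
        refine ⟨by rw [hden, one_div_one_div], ?_⟩
        rw [hden, hzc]
        field_simp
    · rintro ⟨ζ, hζ, hfz⟩
      have hden := hgen ζ hζ
      rw [← hfz]
      constructor
      · show k1 * (1 / (1 + ζ * c)) ^ n = k2 * (ζ * c / (1 + ζ * c)) ^ n
        rw [div_pow, div_pow, one_pow, mul_pow, hζ, one_mul, hc]
        field_simp
      · show 1 / (1 + ζ * c) + ζ * c / (1 + ζ * c) = 1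
        field_simp
  have hroots : {ζ : ℂ | ζ ^ n = 1} = ↑(Polynomial.nthRootsFinset n (1 : ℂ)) := by
    ext ζ
    simp [Polynomial.mem_nthRootsFinset (Nat.pos_of_ne_zero hn0) (1 : ℂ)]
  constructor
  · rw [himg, Set.ncard_image_of_injOn, hroots, Set.ncard_coe_finset,
      (Complex.isPrimitiveRoot_exp n hn0).card_nthRootsFinset]
    intro a ha b hb hab
    have h1 := hgen a ha
    have h2 := hgen b hb
    have : (1:ℂ) / (1 + a * c) = 1 / (1 + b * c) := congrArg Prod.fst hab
    rw [div_eq_div_iff h1 h2, one_mul, one_mul] at this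
    have h3 : a * c = b * c := by linear_combination -this
    exact mul_right_cancel₀ hc0 h3
  · exact hnz
end
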